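/- arXiv:0709.2482 — 11 statements merged into one kernel-verified Lean document; each statement's English description precedes it below -/
import Mathlib

section
/- Let F be a field, χ a monic polynomial of degree l over F with companion matrix Φ_χ, and a, b, c, d ∈ F with ad - bc ≠ 0. If aI_l + bΦ_χ is invertible, then the characteristic polynomial of (cI_l + dΦ_χ)·(aI_l + bΦ_χ)^{-1} equals η(x) = ε·(d - xb)^l·χ((xa - c)/(d - xb)) where ε = det(aI_l + bΦ_χ)^{-1}; more precisely, det(xI_l - (cI_l + dΦ_χ)(aI_l + bΦ_χ)^{-1}) = det((xa - c)I_l - (d - xb)Φ_χ) · det(aI_l + bΦ_χ)^{-1} as polynomials in x. -/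
open Polynomial Matrix

/-- The `l × l` companion matrix of the monic polynomial
`χ(x) = x^l - u₁ x^{l-1} - ⋯ - u_l`. -/
def companionMx {F : Type*} [Field F] (l : ℕ) (u : Fin l → F) :
    Matrix (Fin l) (Fin l) F :=
  Matrix.of fun i j =>
    if (j : ℕ) = l - 1 then u ⟨l - 1 - (i : ℕ), by have := i.isLt; omega⟩
    else if (i : ℕ) = (j : ℕ) + 1 then 1 else 0

/-- If `aI + bΦ_χ` is invertible and `ad - bc ≠ 0`, then the characteristic
polynomial of `(cI + dΦ_χ)(aI + bΦ_χ)⁻¹` equals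
`det((xa - c)I - (d - xb)Φ_χ) · det(aI + bΦ_χ)⁻¹`, which is the polynomial
`ε (d - xb)^l χ((xa - c)/(d - xb))` with `ε = det(aI + bΦ_χ)⁻¹`. -/
theorem charpoly_moebius_companion {F : Type*} [Field F] (l : ℕ) (hl : 1 ≤ l)
    (u : Fin l → F) (a b c d : F) (habcd : a * d - b * c ≠ 0)
    (hinv : IsUnit (a • (1 : Matrix (Fin l) (Fin l) F) + b • companionMx l u)) :
    Matrix.charpoly
        ((c • (1 : Matrix (Fin l) (Fin l) F) + d • companionMx l u) *
          (a • (1 : Matrix (Fin l) (Fin l) F) + b • companionMx l u)⁻¹) =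
      Matrix.det
          ((C a * X - C c) • (1 : Matrix (Fin l) (Fin l) F[X]) -
            (C d - C b * X) • (companionMx l u).map C) *
        C (Matrix.det (a • (1 : Matrix (Fin l) (Fin l) F) + b • companionMx l u))⁻¹ := by
  set Φ := companionMx l u with hΦ
  set A := a • (1 : Matrix (Fin l) (Fin l) F) + b • Φ with hA
  set Cm := c • (1 : Matrix (Fin l) (Fin l) F) + d • Φ with hCm
  have hdet : A.det ≠ 0 := by
    simpa [Matrix.isUnit_iff_isUnit_det, isUnit_iff_ne_zero] using hinv
  have hAinv : A⁻¹ * A = 1 := Matrix.nonsing_inv_mul A (isUnit_iff_ne_zero.mpr hdet)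
  have key : charmatrix (Cm * A⁻¹) * A.map C =
      (C a * X - C c) • (1 : Matrix (Fin l) (Fin l) F[X]) -
        (C d - C b * X) • Φ.map C := by
    rw [charmatrix]
    simp only [RingHom.mapMatrix_apply]
    rw [Matrix.map_mul, sub_mul]
    have h1 : (Cm.map C * (A⁻¹).map C) * A.map C = Cm.map C := by
      rw [mul_assoc, ← Matrix.map_mul, hAinv, Matrix.map_one _ (map_zero C) (map_one C),
        mul_one]
    rw [h1]
    have h2 : (Matrix.scalar (Fin l) (X : F[X])) * A.map C = (X : F[X]) • A.map C := by
      ext i j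
      simp [Matrix.scalar, Matrix.diagonal_mul, Matrix.smul_apply]
    rw [h2, hA, hCm]
    refine Matrix.ext fun i j => ?_
    by_cases h : i = j
    · subst h
      simp only [Matrix.sub_apply, Matrix.smul_apply, Matrix.add_apply, Matrix.map_apply,
        Matrix.one_apply_eq, smul_eq_mul, map_add, _root_.map_mul, _root_.map_one]
      ring
    · simp only [Matrix.sub_apply, Matrix.smul_apply, Matrix.add_apply, Matrix.map_apply,
        Matrix.one_apply_ne h, smul_eq_mul, map_add, _root_.map_mul, map_zero]
      ring
  have hdetA : (A.map C).det = C A.det := (RingHom.map_det C A).symm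
  have := congrArg Matrix.det key
  rw [Matrix.det_mul, hdetA] at this
  rw [Matrix.charpoly]
  rw [← this, mul_assoc, ← Polynomial.C_mul, mul_inv_cancel₀ hdet, Polynomial.C_1, mul_one]
end

section
/- Let F be a field, χ monic of degree l with companion matrix Φ_χ, and T = [[a, c], [b, d]] a matrix over F with ad - bc ≠ 0. If the pair (aI_l + bΦ_χ, cI_l + dΦ_χ) is simultaneously equivalent to the pair (I_l, Φ_η) for some monic polynomial η of degree l (i.e. there exist invertible matrices R, S with R(aI_l + bΦ_χ)S = I_l and R(cI_l + dΦ_χ)S = Φ_η), then det(xI_l - Φ_η) · det(aI_l + bΦ_χ) = det((xa - c)I_l - (d - xb)Φ_χ) as polynomials in x. -/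
open Polynomial Matrix

/-- If `(aI + bΦ_χ, cI + dΦ_χ)` is simultaneously equivalent to `(I, Φ_η)`
for a monic polynomial `η` of degree `l` (with companion matrix `companionMx l w`)
and `ad - bc ≠ 0`, then
`det(xI - Φ_η) · det(aI + bΦ_χ) = det((xa - c)I - (d - xb)Φ_χ)`. -/

theorem charpoly_of_sim_equiv_pair {F : Type*} [Field F] (l : ℕ) (hl : 1 ≤ l)
    (u w : Fin l → F) (a b c d : F) (habcd : a * d - b * c ≠ 0)
    (hequiv : ∃ R S : Matrix (Fin l) (Fin l) F, IsUnit R ∧ IsUnit S ∧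
      R * (a • (1 : Matrix (Fin l) (Fin l) F) + b • companionMx l u) * S = 1 ∧
      R * (c • (1 : Matrix (Fin l) (Fin l) F) + d • companionMx l u) * S = companionMx l w) :
    (companionMx l w).charpoly *
        C (Matrix.det (a • (1 : Matrix (Fin l) (Fin l) F) + b • companionMx l u)) =
      Matrix.det
        ((C a * X - C c) • (1 : Matrix (Fin l) (Fin l) F[X]) -
          (C d - C b * X) • (companionMx l u).map C) := by
  obtain ⟨R, S, hR, hS, h1, h2⟩ := hequiv
  set Φ := companionMx l u with hΦ
  set M := a • (1 : Matrix (Fin l) (Fin l) F) + b • Φ with hM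
  set N := c • (1 : Matrix (Fin l) (Fin l) F) + d • Φ with hN
  let mc : Matrix (Fin l) (Fin l) F →+* Matrix (Fin l) (Fin l) F[X] :=
    (C : F →+* F[X]).mapMatrix
  have h1' : mc R * mc M * mc S = 1 := by
    rw [← _root_.map_mul, ← _root_.map_mul, h1, _root_.map_one]
  have h2' : mc R * mc N * mc S = (companionMx l w).map C := by
    rw [← _root_.map_mul, ← _root_.map_mul, h2]; rfl
  have key : (X : F[X]) • (1 : Matrix (Fin l) (Fin l) F[X]) - (companionMx l w).map C
      = mc R * ((X : F[X]) • mc M - mc N) * mc S := by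
    rw [mul_sub, sub_mul, h2', Matrix.mul_smul, Matrix.smul_mul, h1']
  have hdet1 : (mc R).det * (mc M).det * (mc S).det = 1 := by
    rw [← Matrix.det_mul, ← Matrix.det_mul, h1', Matrix.det_one]
  have hcharp : (companionMx l w).charpoly
      = ((X : F[X]) • (1 : Matrix (Fin l) (Fin l) F[X]) - (companionMx l w).map C).det := by
    rw [Matrix.charpoly]
    congr 1
    refine Matrix.ext fun i j => ?_
    by_cases h : i = j <;> simp [charmatrix, h, Matrix.one_apply]
  have hdetM : C M.det = (mc M).det := RingHom.map_det C M
  have htarget : (X : F[X]) • mc M - mc N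
      = (C a * X - C c) • (1 : Matrix (Fin l) (Fin l) F[X]) -
          (C d - C b * X) • Φ.map C := by
    refine Matrix.ext fun i j => ?_
    simp only [mc, Matrix.sub_apply, Matrix.smul_apply, Matrix.add_apply, Matrix.one_apply,
      Matrix.map_apply, RingHom.mapMatrix_apply, map_add, _root_.map_mul, map_zero,
      _root_.map_one, smul_eq_mul]
    split_ifs with h <;>
      simp [h, hM, hN, Matrix.add_apply, Matrix.smul_apply, Matrix.one_apply, map_add,
        _root_.map_mul, smul_eq_mul] <;> ring
  rw [hcharp, key, hdetM, Matrix.det_mul, Matrix.det_mul, ← htarget]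
  rw [show (mc R).det * ((X : F[X]) • mc M - mc N).det * (mc S).det * (mc M).det
      = ((X : F[X]) • mc M - mc N).det * ((mc R).det * (mc M).det * (mc S).det) from by ring,
    hdet1, mul_one]
end

section
/- Let F be a field, χ(x) = x² - ux - v and η(x) = x² - u'x - v' be monic quadratics over F, and a, b, c, d ∈ F with ad - bc ≠ 0 and a² + uab - vb² ≠ 0. Then det(xI₂ - (cI₂ + dΦ_χ)(aI₂ + bΦ_χ)^{-1}) = x² - u'x - v' if and only if u' = (2ac + uad + ucb - 2vbd)/(a² + uab - vb²) and v' = (-c² - ucd + vd²)/(a² + uab - vb²). -/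
open Polynomial Matrix

/-- Companion matrix of `x² - ux - v`. -/
def Phi {F : Type*} [Field F] (u v : F) : Matrix (Fin 2) (Fin 2) F := !![0, v; 1, u]

/-- Equivalence of two `2×2×2` spatial matrices given by their slice pairs
`(A₁, A₂)` and `(B₁, B₂)`: there exist invertible `R`, `S`, `T` with
`Rᵀ(t₁₁A₁ + t₂₁A₂)S = B₁` and `Rᵀ(t₁₂A₁ + t₂₂A₂)S = B₂`. -/
def SpEquiv {F : Type*} [Field F] (A₁ A₂ B₁ B₂ : Matrix (Fin 2) (Fin 2) F) : Prop :=
  ∃ R S T : Matrix (Fin 2) (Fin 2) F, IsUnit R ∧ IsUnit S ∧ IsUnit T ∧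
    Rᵀ * (T 0 0 • A₁ + T 1 0 • A₂) * S = B₁ ∧
    Rᵀ * (T 0 1 • A₁ + T 1 1 • A₂) * S = B₂

lemma charpoly_fin_two' {F : Type*} [Field F] (M : Matrix (Fin 2) (Fin 2) F) :
    M.charpoly = X^2 - C M.trace * X + C M.det := by
  rw [Matrix.charpoly, Matrix.det_fin_two, Matrix.trace_fin_two, Matrix.det_fin_two]
  simp [charmatrix_apply_eq, charmatrix_apply_ne]
  ring

/-- Characteristic polynomial criterion for . -/
theorem charpoly_moebius_two {F : Type*} [Field F] (u v u' v' a b c d : F)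
    (habcd : a * d - b * c ≠ 0) (hden : a ^ 2 + u * a * b - v * b ^ 2 ≠ 0) :
    Matrix.charpoly
        ((c • (1 : Matrix (Fin 2) (Fin 2) F) + d • Phi u v) *
          (a • (1 : Matrix (Fin 2) (Fin 2) F) + b • Phi u v)⁻¹) =
      X ^ 2 - C u' * X - C v' ↔
    u' = (2 * a * c + u * a * d + u * c * b - 2 * v * b * d) /
          (a ^ 2 + u * a * b - v * b ^ 2) ∧
    v' = (-c ^ 2 - u * c * d + v * d ^ 2) / (a ^ 2 + u * a * b - v * b ^ 2) := by
  set k := a ^ 2 + u * a * b - v * b ^ 2 with hk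
  have hN : (a • (1 : Matrix (Fin 2) (Fin 2) F) + b • Phi u v) = !![a, b*v; b, a + b*u] := by
    ext i j; fin_cases i <;> fin_cases j <;> simp [Phi, Matrix.one_apply, mul_comm]
  have hP : (c • (1 : Matrix (Fin 2) (Fin 2) F) + d • Phi u v) = !![c, d*v; d, c + d*u] := by
    ext i j; fin_cases i <;> fin_cases j <;> simp [Phi, Matrix.one_apply, mul_comm]
  have hdet : (!![a, b*v; b, a + b*u] : Matrix (Fin 2) (Fin 2) F).det = k := by
    simp [Matrix.det_fin_two]; ring
  have hNinv : (a • (1 : Matrix (Fin 2) (Fin 2) F) + b • Phi u v)⁻¹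
      = k⁻¹ • !![a + b*u, -(b*v); -b, a] := by
    rw [hN, Matrix.inv_def, hdet, Matrix.adjugate_fin_two, Ring.inverse_eq_inv']
    simp
  have hM : (c • (1 : Matrix (Fin 2) (Fin 2) F) + d • Phi u v) *
      (a • (1 : Matrix (Fin 2) (Fin 2) F) + b • Phi u v)⁻¹
      = k⁻¹ • !![c*(a+b*u) - d*v*b, -(c*(b*v)) + d*v*a;
                 d*(a+b*u) - (c+d*u)*b, -(d*(b*v)) + (c+d*u)*a] := by
    rw [hNinv, hP, Matrix.mul_smul]
    congr 1
    ext i j; fin_cases i <;> fin_cases j <;>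
      simp [Matrix.mul_apply, Fin.sum_univ_two] <;> ring
  rw [hM, charpoly_fin_two']
  have htr : Matrix.trace (k⁻¹ • !![c*(a+b*u) - d*v*b, -(c*(b*v)) + d*v*a;
                 d*(a+b*u) - (c+d*u)*b, -(d*(b*v)) + (c+d*u)*a])
      = (2 * a * c + u * a * d + u * c * b - 2 * v * b * d) / k := by
    simp [Matrix.trace_fin_two]; field_simp; ring
  have hde : (k⁻¹ • !![c*(a+b*u) - d*v*b, -(c*(b*v)) + d*v*a;
                 d*(a+b*u) - (c+d*u)*b, -(d*(b*v)) + (c+d*u)*a]).det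
      = -((-c ^ 2 - u * c * d + v * d ^ 2) / k) := by
    simp [Matrix.det_fin_two]
    field_simp
    ring
  rw [htr, hde]
  constructor
  · intro h
    have h1 := congrArg (fun p => p.coeff 1) h
    have h0 := congrArg (fun p => p.coeff 0) h
    simp [coeff_X_pow] at h1 h0
    constructor
    · linear_combination -h1
    · linear_combination -h0
  · rintro ⟨h1, h2⟩
    rw [h1, h2, map_neg]; ring
end

section
/- Let F be a field of characteristic 2 and χ(x) = x² - ux - v with u ≠ 0. Then the 2×2×2 spatial matrix with slices (I₂, Φ_χ) is equivalent to the spatial matrix with slices (I₂, Φ_η) where η(x) = x² - x - v/u². Concretely: with a = 1, b = 0, c = 0, d = u^{-1}, the pair (aI₂ + bΦ_χ, cI₂ + dΦ_χ) is simultaneously equivalent to (I₂, Φ_η). -/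
open Polynomial Matrix

/-- In characteristic 2, if  then  is equivalent to
; concretely with  the pair
 is simultaneously equivalent to . -/
theorem normalize_u_char_two {F : Type*} [Field F] [CharP F 2] (u v : F) (hu : u ≠ 0) :
    SpEquiv (1 : Matrix (Fin 2) (Fin 2) F) (Phi u v) 1 (Phi 1 (v / u ^ 2)) ∧
    (∃ R S : Matrix (Fin 2) (Fin 2) F, IsUnit R ∧ IsUnit S ∧
      R * ((1 : F) • (1 : Matrix (Fin 2) (Fin 2) F) + (0 : F) • Phi u v) * S = 1 ∧
      R * ((0 : F) • (1 : Matrix (Fin 2) (Fin 2) F) + u⁻¹ • Phi u v) * S =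
        Phi 1 (v / u ^ 2)) := by
  have hR : IsUnit (!![1,0;0,u] : Matrix (Fin 2) (Fin 2) F) := by
    rw [Matrix.isUnit_iff_isUnit_det]
    simp [Matrix.det_fin_two_of, hu]
  have hS : IsUnit (!![1,0;0,u⁻¹] : Matrix (Fin 2) (Fin 2) F) := by
    rw [Matrix.isUnit_iff_isUnit_det]
    simp [Matrix.det_fin_two_of, hu]
  have h1 : (!![1,0;0,u] : Matrix (Fin 2) (Fin 2) F) * ((1:F) • (1 : Matrix (Fin 2) (Fin 2) F) + (0:F) • Phi u v) * !![1,0;0,u⁻¹] = 1 := by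
    ext i j
    fin_cases i <;> fin_cases j <;>
      simp [Phi, Matrix.mul_apply, Fin.sum_univ_two, Matrix.one_apply, hu]
  have h2 : (!![1,0;0,u] : Matrix (Fin 2) (Fin 2) F) * ((0:F) • (1 : Matrix (Fin 2) (Fin 2) F) + u⁻¹ • Phi u v) * !![1,0;0,u⁻¹] = Phi 1 (v / u ^ 2) := by
    ext i j
    fin_cases i <;> fin_cases j
    · simp [Phi, Matrix.mul_apply, Fin.sum_univ_two, Matrix.one_apply]
    · simp [Phi, Matrix.mul_apply, Fin.sum_univ_two, Matrix.one_apply]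
      field_simp
    · simp [Phi, Matrix.mul_apply, Fin.sum_univ_two, Matrix.one_apply, hu]
    · simp [Phi, Matrix.mul_apply, Fin.sum_univ_two, Matrix.one_apply, hu]
  have hT : (!![1,0;0,u] : Matrix (Fin 2) (Fin 2) F)ᵀ = !![1,0;0,u] := by
    ext i j; fin_cases i <;> fin_cases j <;> simp
  refine ⟨⟨!![1,0;0,u], !![1,0;0,u⁻¹], !![1,0;0,u⁻¹], hR, hS, hS, ?_, ?_⟩,
    ⟨!![1,0;0,u], !![1,0;0,u⁻¹], hR, hS, h1, h2⟩⟩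
  · rw [hT]
    simpa using h1
  · rw [hT]
    simpa using h2
end

section
/- Let F be a field of characteristic 2 and v, v' ∈ F. The 2×2×2 spatial matrix B(v) with slices ([[1,0],[0,1]], [[0,v],[1,1]]) is equivalent to B(v') if and only if v' = v + β + β² for some β ∈ F. -/
open Polynomial Matrix

/-- For ,  is equivalent to  iff 
for some . -/
theorem Bv_equiv_iff {F : Type*} [Field F] [CharP F 2] (v v' : F) :
    SpEquiv (1 : Matrix (Fin 2) (Fin 2) F) (Phi 1 v) 1 (Phi 1 v') ↔
      ∃ β : F, v' = v + β + β ^ 2 := by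
  have htwo : (2 : F) = 0 := by exact_mod_cast CharP.cast_eq_zero F 2
  constructor
  · rintro ⟨R, S, T, hR, hS, hT, e1, e2⟩
    set a := T 0 0 with ha
    set b := T 1 0 with hb
    set c := T 0 1 with hc
    set d := T 1 1 with hd
    have hXm : a • (1 : Matrix (Fin 2) (Fin 2) F) + b • Phi 1 v = !![a, b*v; b, a+b] := by
      ext i j; fin_cases i <;> fin_cases j <;>
        simp [Phi, Matrix.one_apply] <;> ring
    have hYm : c • (1 : Matrix (Fin 2) (Fin 2) F) + d • Phi 1 v = !![c, d*v; d, c+d] := by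
      ext i j; fin_cases i <;> fin_cases j <;>
        simp [Phi, Matrix.one_apply] <;> ring
    rw [hXm] at e1
    rw [hYm] at e2
    set X : Matrix (Fin 2) (Fin 2) F := !![a, b*v; b, a+b] with hX
    set Y : Matrix (Fin 2) (Fin 2) F := !![c, d*v; d, c+d] with hY
    -- X * (S * Rᵀ) = 1
    have hcomm : X * (S * Rᵀ) = 1 := by
      have h1 : S * (Rᵀ * X) = 1 := mul_eq_one_comm.mp e1
      have h2 : (S * Rᵀ) * X = 1 := by rw [Matrix.mul_assoc]; exact h1
      exact mul_eq_one_comm.mp h2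
    have hdet1 : X.det * (S * Rᵀ).det = 1 := by
      rw [← Matrix.det_mul, hcomm, Matrix.det_one]
    have hn0 : X.det ≠ 0 := left_ne_zero_of_mul_eq_one hdet1
    have hadj : X.adjugate = X.det • (S * Rᵀ) := by
      calc X.adjugate = X.adjugate * (X * (S * Rᵀ)) := by rw [hcomm, Matrix.mul_one]
        _ = (X.adjugate * X) * (S * Rᵀ) := by rw [Matrix.mul_assoc]
        _ = (X.det • 1) * (S * Rᵀ) := by rw [Matrix.adjugate_mul]
        _ = X.det • (S * Rᵀ) := by rw [Matrix.smul_mul, Matrix.one_mul]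
    have htrY : (Y * (S * Rᵀ)).trace = (Phi 1 v').trace := by
      rw [← Matrix.mul_assoc, Matrix.trace_mul_comm, ← Matrix.mul_assoc, e2]
    have htraceE : (Y * X.adjugate).trace = X.det * (Phi 1 v').trace := by
      rw [hadj, Matrix.mul_smul, Matrix.trace_smul, htrY, smul_eq_mul]
    have hdetY : Y.det * (S * Rᵀ).det = (Phi 1 v').det := by
      have h : (Rᵀ * Y * S).det = (Phi 1 v').det := by rw [e2]
      simp only [Matrix.det_mul] at h ⊢
      rw [← h]; ring
    have hdetE : Y.det * X.det = X.det ^ 2 * (Phi 1 v').det := by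
      have h1 : (Y * X.adjugate).det = Y.det * X.det := by
        rw [Matrix.det_mul, Matrix.det_adjugate]; norm_num
      have h2 : (Y * X.adjugate).det = X.det ^ 2 * (Phi 1 v').det := by
        rw [hadj, Matrix.mul_smul, Matrix.det_smul, ← hdetY]
        simp only [Matrix.det_mul, Fintype.card_fin]
      rw [← h1, h2]
    -- now make everything concrete
    have hXdet : X.det = a * (a + b) - b * v * b := by
      rw [hX, Matrix.det_fin_two_of]
    have hYdet : Y.det = c * (c + d) - d * v * d := by
      rw [hY, Matrix.det_fin_two_of]
    have hPtr : (Phi 1 v').trace = 1 := by simp [Phi, Matrix.trace_fin_two_of]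
    have hPdet : (Phi 1 v').det = -v' := by simp [Phi, Matrix.det_fin_two_of]
    have hadj2 : X.adjugate = !![a+b, -(b*v); -b, a] := by
      rw [hX, Matrix.adjugate_fin_two_of]
    have H1 : c * (a + b) + d * v * (-b) + (d * (-(b*v)) + (c+d) * a) =
        a * (a + b) - b * v * b := by
      have h := htraceE
      rw [hadj2, hPtr, hXdet, hY, mul_one, Matrix.mul_fin_two,
        Matrix.trace_fin_two_of] at h
      linear_combination h
    have H2 : (c * (c + d) - d * v * d) * (a * (a + b) - b * v * b) =
        (a * (a + b) - b * v * b) ^ 2 * (-v') := by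
      rw [← hXdet, ← hYdet, ← hPdet]; exact hdetE
    rw [hXdet] at hn0
    set n' : F := a * (a + b) - b * v * b with hnn
    set L : F := c*a + c*b + b*d*v with hL
    have hkey : v' * n' ^ 2 = v * n' ^ 2 + L * n' + L ^ 2 := by
      rw [hnn, hL]
      linear_combination H2 + (a^2*v + a*b*v + a*c + a*d*v - b^2*v^2 + b*c*v + b*c
          + b*d*v + 2*c^2 + 2*c*d) * H1 +
        ((-1)*a^3*c*v + (-1)*a^2*b*c*v + a^2*b*d*v^2 + (-1)*a^2*c^2 + (-1)*a^2*c*d*v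
          + a*b^2*c*v^2 + a*b^2*d*v^2 + (-1)*a*b*c^2*v + (-2)*a*b*c^2 + (-2)*a*b*c*d*v
          + a*b*d^2*v^2 + (-2)*a*c^3 + (-3)*a*c^2*d + (-1)*a*c*d^2 + (-1)*b^3*d*v^3
          + (-1)*b^2*c^2*v + (-1)*b^2*c^2 + b^2*c*d*v^2 + (-1)*b^2*c*d*v + (-1)*b*c^3
          + 2*b*c^2*d*v + (-1)*b*c^2*d + 2*b*c*d^2*v) * htwo
    have hn2 : n' ^ 2 ≠ 0 := pow_ne_zero _ hn0
    refine ⟨L / n', ?_⟩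
    have e : (v + L / n' + (L / n') ^ 2) * n' ^ 2 = v * n' ^ 2 + L * n' + L ^ 2 := by
      field_simp
    exact mul_right_cancel₀ hn2 (hkey.trans e.symm)
  · rintro ⟨β, hβ⟩
    have hu : IsUnit (!![(1:F), 0; β, 1]) := by
      rw [Matrix.isUnit_iff_isUnit_det, Matrix.det_fin_two_of]; simp
    have hu' : IsUnit (!![(1:F), β; 0, 1]) := by
      rw [Matrix.isUnit_iff_isUnit_det, Matrix.det_fin_two_of]; simp
    have hRt : (!![(1:F), 0; β, 1])ᵀ = !![1, β; 0, 1] := by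
      ext i j; fin_cases i <;> fin_cases j <;> simp
    refine ⟨!![1, 0; β, 1], !![1, β; 0, 1], !![1, β; 0, 1], hu, hu', hu', ?_, ?_⟩
    · have h : (!![(1:F), β; 0, 1]) 0 0 • (1 : Matrix (Fin 2) (Fin 2) F) +
          (!![(1:F), β; 0, 1]) 1 0 • Phi 1 v = 1 := by simp
      rw [hRt, h, Matrix.mul_one, Matrix.mul_fin_two]
      ext i j
      fin_cases i <;> fin_cases j <;>
        simp [Matrix.one_apply] <;>
        first
          | linear_combination β * htwo
          | ring
    · have h : (!![(1:F), β; 0, 1]) 0 1 • (1 : Matrix (Fin 2) (Fin 2) F) +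
          (!![(1:F), β; 0, 1]) 1 1 • Phi 1 v = !![β, v; 1, 1 + β] := by
        ext i j; fin_cases i <;> fin_cases j <;>
          simp [Phi, Matrix.one_apply] <;> ring
      rw [hRt, h, Matrix.mul_fin_two, Matrix.mul_fin_two]
      ext i j
      fin_cases i <;> fin_cases j <;>
        simp [Phi] <;>
        first
          | linear_combination β * htwo
          | linear_combination β ^ 2 * htwo - hβ
          | linear_combination hβ + β ^ 2 * htwo
          | ring
end

section
/- Let F be a field of characteristic 2 and v, v' ∈ F. The spatial matrices A(v) (slices I₂ and [[0,v],[1,0]]) and B(v') (slices I₂ and [[0,v'],[1,1]]) are never equivalent. -/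
open Polynomial Matrix

/-- For ,  and  are never equivalent. -/
theorem Av_not_equiv_Bv {F : Type*} [Field F] [CharP F 2] (v v' : F) :
    ¬ SpEquiv (1 : Matrix (Fin 2) (Fin 2) F) (Phi 0 v) 1 (Phi 1 v') := by
  rintro ⟨R, S, T, hR, hS, hT, h1, h2⟩
  have htwo : (2 : F) = 0 := by exact_mod_cast CharP.cast_eq_zero F 2
  set a := T 0 0; set b := T 1 0; set c := T 0 1; set d := T 1 1
  have hMeq : T 0 0 • (1 : Matrix (Fin 2) (Fin 2) F) + T 1 0 • Phi 0 v = !![a, b*v; b, a] := by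
    ext i j; fin_cases i <;> fin_cases j <;>
      simp [Phi, Matrix.one_apply, mul_comm, a, b]
  have hNeq : T 0 1 • (1 : Matrix (Fin 2) (Fin 2) F) + T 1 1 • Phi 0 v = !![c, d*v; d, c] := by
    ext i j; fin_cases i <;> fin_cases j <;>
      simp [Phi, Matrix.one_apply, mul_comm, c, d]
  rw [hMeq] at h1
  rw [hNeq] at h2
  set M : Matrix (Fin 2) (Fin 2) F := !![a, b*v; b, a]
  set N : Matrix (Fin 2) (Fin 2) F := !![c, d*v; d, c]
  -- M * (S * Rᵀ) = 1
  have h1'' : S * (Rᵀ * M) = 1 := mul_eq_one_comm.mp h1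
  have h1''' : (S * Rᵀ) * M = 1 := by rw [Matrix.mul_assoc]; exact h1''
  have hSR : M * (S * Rᵀ) = 1 := mul_eq_one_comm.mp h1'''
  have hSRinv : S * Rᵀ = M⁻¹ := Matrix.inv_eq_right_inv hSR ▸ rfl
  -- trace Φ' = trace (N * M⁻¹)
  have htr : Matrix.trace (Phi 1 v') = Matrix.trace (N * (S * Rᵀ)) := by
    rw [← h2, Matrix.mul_assoc, Matrix.trace_mul_comm, Matrix.mul_assoc]
  have hMinv : M⁻¹ = (Matrix.det M)⁻¹ • !![a, -(b*v); -b, a] := by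
    rw [Matrix.inv_def, Matrix.adjugate_fin_two]
    simp [Ring.inverse_eq_inv', M]
  have htrΦ : Matrix.trace (Phi 1 v') = 1 := by
    simp [Phi, Matrix.trace_fin_two]
  rw [htrΦ, hSRinv, hMinv] at htr
  have htr0 : Matrix.trace (N * (Matrix.det M)⁻¹ • !![a, -(b*v); -b, a]) = 0 := by
    simp [Matrix.trace_fin_two, Matrix.mul_apply, Fin.sum_univ_two, Matrix.smul_apply, N]
    linear_combination ((Matrix.det M)⁻¹ * (c*a - d*v*b)) * htwo
  rw [htr0] at htr
  exact one_ne_zero htr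
end

section
/- Let F be a field of characteristic 2 and v, v' ∈ F. Then A(v) is equivalent to A(v') if and only if there exist α, β, γ, δ ∈ F², with αδ + βγ ≠ 0 and γv + δ ≠ 0, such that v' = (αv + β)/(γv + δ), where F² denotes the set of squares of F. -/
open Polynomial Matrix

section Aux

variable {F : Type*} [Field F] [CharP F 2]

lemma Av_construct (v x y z w : F) (hD : z ^ 2 * v + w ^ 2 ≠ 0)
    (he : x * w + y * z ≠ 0) :
    SpEquiv (1 : Matrix (Fin 2) (Fin 2) F) (Phi 0 v) 1
      (Phi 0 ((x ^ 2 * v + y ^ 2) / (z ^ 2 * v + w ^ 2))) := by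
  have h2 : (2 : F) = 0 := by exact_mod_cast CharP.cast_eq_zero F 2
  set D : F := z ^ 2 * v + w ^ 2 with hDdef
  set e : F := x * w + y * z with hedef
  have hwx : w * x - y * z ≠ 0 := by
    intro h
    apply he
    linear_combination h + (y * z) * h2
  -- scaled versions of R and S
  set A : Matrix (Fin 2) (Fin 2) F := !![e, y * w + x * z * v; 0, D] with hA
  set C : Matrix (Fin 2) (Fin 2) F := !![w, y; z, x] with hC
  set R : Matrix (Fin 2) (Fin 2) F := !![1, 0; (y * w + x * z * v) / e, D / e] with hR
  set S : Matrix (Fin 2) (Fin 2) F := !![w / D, y / D; z / D, x / D] with hS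
  have hRT : Rᵀ = e⁻¹ • A := by
    ext i j
    fin_cases i <;> fin_cases j <;>
      simp [hR, hA, Matrix.transpose_apply, div_eq_inv_mul] <;> field_simp
  have hSC : S = D⁻¹ • C := by
    ext i j
    fin_cases i <;> fin_cases j <;> simp [hS, hC, div_eq_inv_mul]
  have hM1 : ((w : F) • (1 : Matrix (Fin 2) (Fin 2) F) + z • Phi 0 v) =
      !![w, z * v; z, w] := by
    ext i j
    fin_cases i <;> fin_cases j <;> simp [Phi, Matrix.one_apply]
  have hM2 : ((y : F) • (1 : Matrix (Fin 2) (Fin 2) F) + x • Phi 0 v) =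
      !![y, x * v; x, y] := by
    ext i j
    fin_cases i <;> fin_cases j <;> simp [Phi, Matrix.one_apply]
  have key1 : A * !![w, z * v; z, w] * C = (e * D) • (1 : Matrix (Fin 2) (Fin 2) F) := by
    ext i j
    fin_cases i <;> fin_cases j <;>
      simp [hA, hC, Matrix.mul_apply, Fin.sum_univ_two, Matrix.one_apply, hDdef, hedef]
    · linear_combination (y * z * w ^ 2 + v * x * z ^ 2 * w) * h2
    · linear_combination (y ^ 2 * z * w + x * y * w ^ 2 + v * x * y * z ^ 2 + v * x ^ 2 * z * w) * h2
    · linear_combination (z * w ^ 3 + v * z ^ 3 * w) * h2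
    · ring
  have key2 : A * !![y, x * v; x, y] * C =
      !![0, e * (x ^ 2 * v + y ^ 2); e * D, 0] := by
    ext i j
    fin_cases i <;> fin_cases j <;>
      simp [hA, hC, Matrix.mul_apply, Fin.sum_univ_two, hDdef, hedef]
    · linear_combination (y ^ 2 * z * w + x * y * w ^ 2 + v * x * y * z ^ 2 + v * x ^ 2 * z * w) * h2
    · linear_combination (x * y ^ 2 * w + v * x ^ 2 * y * z) * h2
    · ring
    · linear_combination (x * y * w ^ 2 + v * x * y * z ^ 2) * h2
  refine ⟨R, S, !![w, y; z, x], ?_, ?_, ?_, ?_, ?_⟩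
  · rw [Matrix.isUnit_iff_isUnit_det, isUnit_iff_ne_zero, Matrix.det_fin_two_of]
    simp only [one_mul, zero_mul, sub_zero]
    exact div_ne_zero hD he
  · rw [Matrix.isUnit_iff_isUnit_det, isUnit_iff_ne_zero, hS, Matrix.det_fin_two_of,
      div_mul_div_comm, div_mul_div_comm, div_sub_div_same]
    exact div_ne_zero hwx (mul_ne_zero hD hD)
  · rw [Matrix.isUnit_iff_isUnit_det, isUnit_iff_ne_zero, Matrix.det_fin_two_of]
    exact hwx
  · have e00 : (!![w, y; z, x] : Matrix (Fin 2) (Fin 2) F) 0 0 = w := by simp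
    have e10 : (!![w, y; z, x] : Matrix (Fin 2) (Fin 2) F) 1 0 = z := by simp
    rw [e00, e10, hM1, hRT, hSC, Matrix.smul_mul, Matrix.mul_smul, Matrix.smul_mul, key1,
      smul_smul, smul_smul]
    rw [show D⁻¹ * e⁻¹ * (e * D) = 1 by field_simp, one_smul]
  · have e01 : (!![w, y; z, x] : Matrix (Fin 2) (Fin 2) F) 0 1 = y := by simp
    have e11 : (!![w, y; z, x] : Matrix (Fin 2) (Fin 2) F) 1 1 = x := by simp
    rw [e01, e11, hM2, hRT, hSC, Matrix.smul_mul, Matrix.mul_smul, Matrix.smul_mul, key2]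
    ext i j
    fin_cases i <;> fin_cases j <;> simp [Phi] <;> field_simp

end Aux

/-- For ,  is equivalent to  iff
 with  squares, , . -/
theorem Av_equiv_iff_char_two {F : Type*} [Field F] [CharP F 2] (v v' : F) :
    SpEquiv (1 : Matrix (Fin 2) (Fin 2) F) (Phi 0 v) 1 (Phi 0 v') ↔
      ∃ α β γ δ : F, (∃ x : F, α = x ^ 2) ∧ (∃ x : F, β = x ^ 2) ∧
        (∃ x : F, γ = x ^ 2) ∧ (∃ x : F, δ = x ^ 2) ∧
        α * δ + β * γ ≠ 0 ∧ γ * v + δ ≠ 0 ∧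
        v' = (α * v + β) / (γ * v + δ) := by
  have h2 : (2 : F) = 0 := by exact_mod_cast CharP.cast_eq_zero F 2
  constructor
  · rintro ⟨R, S, T, hR, hS, hT, h1, hB⟩
    have hdT : T.det ≠ 0 := ((Matrix.isUnit_iff_isUnit_det T).mp hT).ne_zero
    have hM1 : (T 0 0 • (1 : Matrix (Fin 2) (Fin 2) F) + T 1 0 • Phi 0 v) =
        !![T 0 0, T 1 0 * v; T 1 0, T 0 0] := by
      ext i j
      fin_cases i <;> fin_cases j <;> simp [Phi, Matrix.one_apply]
    have hM2 : (T 0 1 • (1 : Matrix (Fin 2) (Fin 2) F) + T 1 1 • Phi 0 v) =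
        !![T 0 1, T 1 1 * v; T 1 1, T 0 1] := by
      ext i j
      fin_cases i <;> fin_cases j <;> simp [Phi, Matrix.one_apply]
    have E1 : R.det * (T 0 0 * T 0 0 - T 1 0 * v * T 1 0) * S.det = 1 := by
      have := congrArg Matrix.det h1
      rwa [Matrix.det_mul, Matrix.det_mul, Matrix.det_transpose, hM1,
        Matrix.det_fin_two_of, Matrix.det_one] at this
    have E2 : R.det * (T 0 1 * T 0 1 - T 1 1 * v * T 1 1) * S.det = -v' := by
      have h := congrArg Matrix.det hB
      rw [Matrix.det_mul, Matrix.det_mul, Matrix.det_transpose, hM2,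
        Matrix.det_fin_two_of, Phi, Matrix.det_fin_two_of] at h
      linear_combination h
    have hDen : T 1 0 ^ 2 * v + T 0 0 ^ 2 ≠ 0 := by
      intro h
      have : (0 : F) = 1 := by
        rw [← E1]
        linear_combination (-(R.det * S.det)) * h + (R.det * S.det * v * T 1 0 ^ 2) * h2
      exact one_ne_zero this.symm
    refine ⟨T 1 1 ^ 2, T 0 1 ^ 2, T 1 0 ^ 2, T 0 0 ^ 2, ⟨_, rfl⟩, ⟨_, rfl⟩, ⟨_, rfl⟩, ⟨_, rfl⟩,
      ?_, hDen, ?_⟩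
    · intro h
      apply hdT
      have hsq : T.det ^ 2 = 0 := by
        rw [Matrix.det_fin_two]
        linear_combination h - (T 0 0 * T 1 1 * T 0 1 * T 1 0) * h2
      exact pow_eq_zero_iff (n := 2) (by norm_num) |>.mp hsq
    · rw [eq_div_iff hDen]
      linear_combination (-(T 0 1 ^ 2 + v * T 1 1 ^ 2)) * E1 +
        (-(T 0 0 ^ 2 + v * T 1 0 ^ 2)) * E2 +
        (-(T 0 1 ^ 2 + v * T 1 1 ^ 2) -
          R.det * S.det * (v * T 1 0 ^ 2 * T 0 1 ^ 2 - T 0 0 ^ 2 * v * T 1 1 ^ 2) +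
          v' * T 1 0 ^ 2 * v + v' * T 0 0 ^ 2 +
          T 1 0 ^ 2 * v * T 0 1 ^ 2 * R.det * S.det -
          T 1 0 ^ 2 * v ^ 2 * T 1 1 ^ 2 * R.det * S.det -
          v * T 0 0 ^ 2 * T 1 1 ^ 2 * R.det * S.det +
          T 0 0 ^ 2 * T 0 1 ^ 2 * R.det * S.det) * h2
  · rintro ⟨α, β, γ, δ, ⟨x, rfl⟩, ⟨y, rfl⟩, ⟨z, rfl⟩, ⟨w, rfl⟩, hne, hDen, hv⟩
    have he : x * w + y * z ≠ 0 := by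
      intro h
      apply hne
      linear_combination (x * w + y * z) * h - (x * w * y * z) * h2
    have hD : z ^ 2 * v + w ^ 2 ≠ 0 := by
      intro h; apply hDen; linear_combination h
    have := Av_construct v x y z w hD he
    rwa [show (x ^ 2 * v + y ^ 2) / (z ^ 2 * v + w ^ 2) = v' by rw [hv]] at this
end

section
/- Over an algebraically closed field F with char F ≠ 2, the 2×2×2 spatial matrix A(1) with slices ([[1,0],[0,1]], [[0,1],[1,0]]) is equivalent to the spatial matrix with slices ([[1,0],[0,0]], [[0,0],[0,1]]). -/
open Polynomial Matrix

/-- Over an algebraically closed field of characteristic ≠ 2,  is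
equivalent to . -/
theorem A1_equiv_diag {F : Type*} [Field F] [IsAlgClosed F] (hF : ringChar F ≠ 2) :
    SpEquiv (1 : Matrix (Fin 2) (Fin 2) F) !![0, 1; 1, 0]
      !![1, 0; 0, 0] !![0, 0; 0, 1] := by
  have h2 : (2 : F) ≠ 0 := Ring.two_ne_zero hF
  have hd : (-(1/2) : F) ≠ 0 := neg_ne_zero.mpr (one_div_ne_zero h2)
  refine ⟨!![1/2, 1/2; 1/2, -(1/2)], !![1/2, 1/2; 1/2, -(1/2)], !![1, 1; 1, -1],
    ?_, ?_, ?_, ?_, ?_⟩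
  · rw [Matrix.isUnit_iff_isUnit_det]
    have : (!![1/2, 1/2; 1/2, -(1/2)] : Matrix (Fin 2) (Fin 2) F).det = -(1/2) := by
      simp [Matrix.det_fin_two_of]; field_simp; ring
    rw [this]; exact isUnit_iff_ne_zero.2 hd
  · rw [Matrix.isUnit_iff_isUnit_det]
    have : (!![1/2, 1/2; 1/2, -(1/2)] : Matrix (Fin 2) (Fin 2) F).det = -(1/2) := by
      simp [Matrix.det_fin_two_of]; field_simp; ring
    rw [this]; exact isUnit_iff_ne_zero.2 hd
  · rw [Matrix.isUnit_iff_isUnit_det]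
    have : (!![1, 1; 1, -1] : Matrix (Fin 2) (Fin 2) F).det = -2 := by
      simp [Matrix.det_fin_two_of]; ring
    rw [this]; exact isUnit_iff_ne_zero.2 (by simpa using h2)
  · ext i j
    fin_cases i <;> fin_cases j <;>
      simp [Matrix.mul_apply, Fin.sum_univ_two, Matrix.one_apply,
        Matrix.transpose_apply, Matrix.vecHead, Matrix.vecTail] <;> field_simp <;> ring
  · ext i j
    fin_cases i <;> fin_cases j <;>
      simp [Matrix.mul_apply, Fin.sum_univ_two, Matrix.one_apply,
        Matrix.transpose_apply, Matrix.vecHead, Matrix.vecTail] <;> field_simp <;> ring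
end

section
/- Let F be a field and u, v, u', v' ∈ F. The 2×2×2 spatial matrices D(u,v) (slices I₂, [[0,v],[1,u]]) and D(u',v') (slices I₂, [[0,v'],[1,u']]) with x² - ux - v and x² - u'x - v' both irreducible or both squares of a linear factor are equivalent if and only if there exist a, b, c, d ∈ F with ad - bc ≠ 0, a² + uab - vb² ≠ 0, u' = (2ac + uad + ucb - 2vbd)/(a² + uab - vb²), and v' = (-c² - ucd + vd²)/(a² + uab - vb²). -/
open Polynomial Matrix

set_option maxHeartbeats 1600000 in
/--  and , with  and  both
irreducible or both squares of a linear factor, are equivalent iff there exist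
 with ,  and the Möbius formulas. -/
theorem Duv_equiv_iff {F : Type*} [Field F] (u v u' v' : F)
    (hpow : (Irreducible (X ^ 2 - C u * X - C v) ∧
              Irreducible (X ^ 2 - C u' * X - C v')) ∨
            ((∃ lam : F, X ^ 2 - C u * X - C v = (X - C lam) ^ 2) ∧
              (∃ mu : F, X ^ 2 - C u' * X - C v' = (X - C mu) ^ 2))) :
    SpEquiv (1 : Matrix (Fin 2) (Fin 2) F) (Phi u v) 1 (Phi u' v') ↔
      ∃ a b c d : F, a * d - b * c ≠ 0 ∧ a ^ 2 + u * a * b - v * b ^ 2 ≠ 0 ∧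
        u' = (2 * a * c + u * a * d + u * c * b - 2 * v * b * d) /
              (a ^ 2 + u * a * b - v * b ^ 2) ∧
        v' = (-c ^ 2 - u * c * d + v * d ^ 2) / (a ^ 2 + u * a * b - v * b ^ 2) := by
  clear hpow
  constructor
  · rintro ⟨R, S, T, hR, hS, hT, h1, h2⟩
    obtain ⟨a, c, b, d, rfl⟩ : ∃ a c b d, T = !![a, c; b, d] :=
      ⟨T 0 0, T 0 1, T 1 0, T 1 1, by ext i j; fin_cases i <;> fin_cases j <;> rfl⟩
    rw [show (!![a, c; b, d] : Matrix (Fin 2) (Fin 2) F) 0 0 = a from rfl,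
      show (!![a, c; b, d] : Matrix (Fin 2) (Fin 2) F) 1 0 = b from rfl] at h1
    rw [show (!![a, c; b, d] : Matrix (Fin 2) (Fin 2) F) 0 1 = c from rfl,
      show (!![a, c; b, d] : Matrix (Fin 2) (Fin 2) F) 1 1 = d from rfl] at h2
    have hMexp : a • (1 : Matrix (Fin 2) (Fin 2) F) + b • Phi u v
        = !![a, b*v; b, a + b*u] := by
      ext i j; fin_cases i <;> fin_cases j <;>
        simp [Phi, Matrix.one_apply] <;> ring
    have hNexp : c • (1 : Matrix (Fin 2) (Fin 2) F) + d • Phi u v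
        = !![c, d*v; d, c + d*u] := by
      ext i j; fin_cases i <;> fin_cases j <;>
        simp [Phi, Matrix.one_apply] <;> ring
    rw [hMexp] at h1
    rw [hNexp] at h2
    have e1 := congrArg Matrix.det h1
    have e2 := congrArg Matrix.det h2
    simp only [Matrix.det_mul, Matrix.det_transpose, Matrix.det_fin_two_of, Matrix.det_one,
      Phi] at e1 e2
    have hΔ : a ^ 2 + u * a * b - v * b ^ 2 ≠ 0 := by
      intro h
      exact one_ne_zero (α := F) (by linear_combination -e1 + (R.det * S.det) * h)
    have hdT : a * d - b * c ≠ 0 := by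
      have h' := isUnit_iff_ne_zero.1 ((Matrix.isUnit_iff_isUnit_det _).1 hT)
      rw [Matrix.det_fin_two_of] at h'
      intro h; exact h' (by linear_combination h)
    refine ⟨a, b, c, d, hdT, hΔ, ?_, ?_⟩
    · -- u' via trace
      have hME : !![a, b*v; b, a + b*u] *
          ((a ^ 2 + u * a * b - v * b ^ 2)⁻¹ • !![a + b*u, -(b*v); -b, a]) = 1 := by
        have hΔ1 : a * (a + u * b) - b ^ 2 * v ≠ 0 := fun h => hΔ (by linear_combination h)
        have hΔ2 : a * (a + b * u) - b ^ 2 * v ≠ 0 := fun h => hΔ (by linear_combination h)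
        ext i j; fin_cases i <;> fin_cases j <;>
          simp [Matrix.mul_apply, Fin.sum_univ_two, Matrix.one_apply, Matrix.smul_apply] <;>
          (try field_simp) <;> (try ring)
      have h1' : S * (Rᵀ * !![a, b*v; b, a + b*u]) = 1 :=
        mul_eq_one_comm.1 h1
      have hSR : S * Rᵀ
          = (a ^ 2 + u * a * b - v * b ^ 2)⁻¹ • !![a + b*u, -(b*v); -b, a] := by
        calc S * Rᵀ = S * Rᵀ * 1 := by rw [mul_one]
          _ = S * Rᵀ * (!![a, b*v; b, a + b*u] *
              ((a ^ 2 + u * a * b - v * b ^ 2)⁻¹ • !![a + b*u, -(b*v); -b, a])) := by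
                rw [hME]
          _ = (S * (Rᵀ * !![a, b*v; b, a + b*u])) *
              ((a ^ 2 + u * a * b - v * b ^ 2)⁻¹ • !![a + b*u, -(b*v); -b, a]) := by
                simp only [Matrix.mul_assoc]
          _ = _ := by rw [h1', one_mul]
      have htr := congrArg Matrix.trace h2
      rw [Matrix.mul_assoc, Matrix.trace_mul_comm, Matrix.mul_assoc,
        Matrix.trace_mul_comm, hSR] at htr
      have hlhs : ((a ^ 2 + u * a * b - v * b ^ 2)⁻¹ • !![a + b*u, -(b*v); -b, a] *
          !![c, d*v; d, c + d*u]).trace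
          = (a ^ 2 + u * a * b - v * b ^ 2)⁻¹ *
            (2 * a * c + u * a * d + u * c * b - 2 * v * b * d) := by
        simp [Matrix.trace_fin_two, Matrix.mul_apply, Fin.sum_univ_two, Matrix.smul_apply]
        ring
      have hrhs : (Phi u' v').trace = u' := by
        simp [Phi, Matrix.trace_fin_two]
      rw [hlhs, hrhs] at htr
      rw [eq_div_iff hΔ, ← htr]
      rw [mul_comm, ← mul_assoc, mul_inv_cancel₀ hΔ, one_mul]
    · -- v' via det
      rw [eq_div_iff hΔ]
      linear_combination (-(c ^ 2 + u * c * d - v * d ^ 2)) * e1 +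
        (a ^ 2 + u * a * b - v * b ^ 2) * e2
  · rintro ⟨a, b, c, d, hδ, hΔ, hu, hv⟩
    subst hu hv
    refine ⟨!![1, 0; -((a*c + u*c*b - v*b*d)/(a*d - b*c)),
              (a ^ 2 + u * a * b - v * b ^ 2)/(a*d - b*c)],
            ((a ^ 2 + u * a * b - v * b ^ 2)⁻¹ • !![a + b*u, -(b*v); -b, a]) *
              !![1, (a*c + u*c*b - v*b*d)/(a ^ 2 + u * a * b - v * b ^ 2);
                 0, (a*d - b*c)/(a ^ 2 + u * a * b - v * b ^ 2)],
            !![a, c; b, d], ?_, ?_, ?_, ?_, ?_⟩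
    · apply (Matrix.isUnit_iff_isUnit_det _).2
      rw [isUnit_iff_ne_zero, Matrix.det_fin_two_of]
      intro h
      apply hΔ
      field_simp at h
      linear_combination h
    · have hE : IsUnit ((a ^ 2 + u * a * b - v * b ^ 2)⁻¹ •
          !![a + b*u, -(b*v); -b, a] : Matrix (Fin 2) (Fin 2) F) := by
        apply (Matrix.isUnit_iff_isUnit_det _).2
        rw [isUnit_iff_ne_zero, Matrix.det_smul, Fintype.card_fin, Matrix.det_fin_two_of]
        intro h
        rcases mul_eq_zero.1 h with h' | h'
        · exact inv_ne_zero hΔ ((pow_eq_zero_iff (by norm_num : (2:ℕ) ≠ 0)).1 h')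
        · exact hΔ (by linear_combination h')
      have hP : IsUnit (!![1, (a*c + u*c*b - v*b*d)/(a ^ 2 + u * a * b - v * b ^ 2);
                 0, (a*d - b*c)/(a ^ 2 + u * a * b - v * b ^ 2)] :
          Matrix (Fin 2) (Fin 2) F) := by
        apply (Matrix.isUnit_iff_isUnit_det _).2
        rw [isUnit_iff_ne_zero, Matrix.det_fin_two_of]
        intro h
        apply hδ
        field_simp at h
        rcases div_eq_zero_iff.1 h with h | h
        · linear_combination h
        · exact absurd (by linear_combination h) hΔ
      exact hE.mul hP
    · apply (Matrix.isUnit_iff_isUnit_det _).2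
      rw [isUnit_iff_ne_zero, Matrix.det_fin_two_of]
      intro h; exact hδ (by linear_combination h)
    · -- first slice equation
      rw [show (!![a, c; b, d] : Matrix (Fin 2) (Fin 2) F) 0 0 = a from rfl,
        show (!![a, c; b, d] : Matrix (Fin 2) (Fin 2) F) 1 0 = b from rfl]
      have hRT : (!![1, 0; -((a*c + u*c*b - v*b*d)/(a*d - b*c)),
              (a ^ 2 + u * a * b - v * b ^ 2)/(a*d - b*c)] : Matrix (Fin 2) (Fin 2) F)ᵀ
          = !![1, -((a*c + u*c*b - v*b*d)/(a*d - b*c));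
               0, (a ^ 2 + u * a * b - v * b ^ 2)/(a*d - b*c)] := by
        ext i j; fin_cases i <;> fin_cases j <;> rfl
      have hMexp : a • (1 : Matrix (Fin 2) (Fin 2) F) + b • Phi u v
          = !![a, b*v; b, a + b*u] := by
        ext i j; fin_cases i <;> fin_cases j <;>
          simp [Phi, Matrix.one_apply] <;> ring
      rw [hRT, hMexp]
      have hME : !![a, b*v; b, a + b*u] *
          ((a ^ 2 + u * a * b - v * b ^ 2)⁻¹ • !![a + b*u, -(b*v); -b, a]) = 1 := by
        have hΔ1 : a * (a + u * b) - b ^ 2 * v ≠ 0 := fun h => hΔ (by linear_combination h)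
        have hΔ2 : a * (a + b * u) - b ^ 2 * v ≠ 0 := fun h => hΔ (by linear_combination h)
        ext i j; fin_cases i <;> fin_cases j <;>
          simp [Matrix.mul_apply, Fin.sum_univ_two, Matrix.one_apply, Matrix.smul_apply] <;>
          (try field_simp) <;> (try ring)
      have hPP : !![1, -((a*c + u*c*b - v*b*d)/(a*d - b*c));
               0, (a ^ 2 + u * a * b - v * b ^ 2)/(a*d - b*c)] *
            !![1, (a*c + u*c*b - v*b*d)/(a ^ 2 + u * a * b - v * b ^ 2);
                 0, (a*d - b*c)/(a ^ 2 + u * a * b - v * b ^ 2)] = 1 := by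
        have hΔ1 : a * (a + u * b) - b ^ 2 * v ≠ 0 := fun h => hΔ (by linear_combination h)
        have hΔ2 : a * (a + b * u) - b ^ 2 * v ≠ 0 := fun h => hΔ (by linear_combination h)
        have hδ1 : a * d - c * b ≠ 0 := fun h => hδ (by linear_combination h)
        ext i j; fin_cases i <;> fin_cases j <;>
          simp [Matrix.mul_apply, Fin.sum_univ_two, Matrix.one_apply, Matrix.smul_apply] <;>
          (try field_simp) <;> (try ring)
      calc _ = (!![1, -((a*c + u*c*b - v*b*d)/(a*d - b*c));
               0, (a ^ 2 + u * a * b - v * b ^ 2)/(a*d - b*c)] *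
              (!![a, b*v; b, a + b*u] *
                ((a ^ 2 + u * a * b - v * b ^ 2)⁻¹ • !![a + b*u, -(b*v); -b, a]))) *
            !![1, (a*c + u*c*b - v*b*d)/(a ^ 2 + u * a * b - v * b ^ 2);
                 0, (a*d - b*c)/(a ^ 2 + u * a * b - v * b ^ 2)] := by
              simp only [Matrix.mul_assoc]
        _ = 1 := by rw [hME, Matrix.mul_one, hPP]
    · -- second slice equation
      rw [show (!![a, c; b, d] : Matrix (Fin 2) (Fin 2) F) 0 1 = c from rfl,
        show (!![a, c; b, d] : Matrix (Fin 2) (Fin 2) F) 1 1 = d from rfl]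
      have hRT : (!![1, 0; -((a*c + u*c*b - v*b*d)/(a*d - b*c)),
              (a ^ 2 + u * a * b - v * b ^ 2)/(a*d - b*c)] : Matrix (Fin 2) (Fin 2) F)ᵀ
          = !![1, -((a*c + u*c*b - v*b*d)/(a*d - b*c));
               0, (a ^ 2 + u * a * b - v * b ^ 2)/(a*d - b*c)] := by
        ext i j; fin_cases i <;> fin_cases j <;> rfl
      have hNexp : c • (1 : Matrix (Fin 2) (Fin 2) F) + d • Phi u v
          = !![c, d*v; d, c + d*u] := by
        ext i j; fin_cases i <;> fin_cases j <;>
          simp [Phi, Matrix.one_apply] <;> ring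
      rw [hRT, hNexp]
      have hNE : !![c, d*v; d, c + d*u] *
          ((a ^ 2 + u * a * b - v * b ^ 2)⁻¹ • !![a + b*u, -(b*v); -b, a])
          = (a ^ 2 + u * a * b - v * b ^ 2)⁻¹ •
            !![a*c + u*c*b - v*b*d, v*(a*d - b*c); a*d - b*c, a*c + u*a*d - v*b*d] := by
        ext i j; fin_cases i <;> fin_cases j <;>
          simp [Matrix.mul_apply, Fin.sum_univ_two, Matrix.smul_apply] <;>
          (try field_simp) <;> (try ring)
      have hfin : !![1, -((a*c + u*c*b - v*b*d)/(a*d - b*c));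
               0, (a ^ 2 + u * a * b - v * b ^ 2)/(a*d - b*c)] *
            ((a ^ 2 + u * a * b - v * b ^ 2)⁻¹ •
            !![a*c + u*c*b - v*b*d, v*(a*d - b*c); a*d - b*c, a*c + u*a*d - v*b*d]) *
            !![1, (a*c + u*c*b - v*b*d)/(a ^ 2 + u * a * b - v * b ^ 2);
                 0, (a*d - b*c)/(a ^ 2 + u * a * b - v * b ^ 2)]
          = Phi ((2 * a * c + u * a * d + u * c * b - 2 * v * b * d) /
              (a ^ 2 + u * a * b - v * b ^ 2))
              ((-c ^ 2 - u * c * d + v * d ^ 2) / (a ^ 2 + u * a * b - v * b ^ 2)) := by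
        have hΔ1 : a * (a + u * b) - b ^ 2 * v ≠ 0 := fun h => hΔ (by linear_combination h)
        have hΔ2 : a * (a + b * u) - b ^ 2 * v ≠ 0 := fun h => hΔ (by linear_combination h)
        have hδ1 : a * d - c * b ≠ 0 := fun h => hδ (by linear_combination h)
        ext i j; fin_cases i <;> fin_cases j <;>
          simp [Phi, Matrix.mul_apply, Fin.sum_univ_two, Matrix.smul_apply] <;>
          (try field_simp) <;> (try ring)
      calc _ = (!![1, -((a*c + u*c*b - v*b*d)/(a*d - b*c));
               0, (a ^ 2 + u * a * b - v * b ^ 2)/(a*d - b*c)] *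
              (!![c, d*v; d, c + d*u] *
                ((a ^ 2 + u * a * b - v * b ^ 2)⁻¹ • !![a + b*u, -(b*v); -b, a]))) *
            !![1, (a*c + u*c*b - v*b*d)/(a ^ 2 + u * a * b - v * b ^ 2);
                 0, (a*d - b*c)/(a ^ 2 + u * a * b - v * b ^ 2)] := by
              simp only [Matrix.mul_assoc]
        _ = _ := by rw [hNE]; exact hfin
end

section
/- Let F be a field of characteristic 2 and v ∈ F. The spatial matrix B(v) with slices (I₂, [[0,v],[1,1]]) is equivalent to B(v + β + β²) for every β ∈ F. Concretely, setting v' = v + β + β²: if v' ≠ 0 take (a,b,c,d) = (β, 1, v', 0), and if v' = 0 take (a,b,c,d) = (1, 0, β, 1); in both cases ad - bc ≠ 0, a² + ab - vb² ≠ 0, and the resulting transformed pair (aI₂ + bΦ, cI₂ + dΦ) with Φ = [[0,v],[1,1]] is simultaneously equivalent to (I₂, [[0,v'],[1,1]]). -/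
open Polynomial Matrix

section Aux

variable {F : Type*} [Field F] [CharP F 2]

lemma aux_unit_of_det {M : Matrix (Fin 2) (Fin 2) F} (h : M.det ≠ 0) : IsUnit M := by
  rwa [Matrix.isUnit_iff_isUnit_det, isUnit_iff_ne_zero]

end Aux

/-- In characteristic 2, `B(v)` is equivalent to `B(v + β + β²)` for every
`β`; concretely, with `v' = v + β + β²`, the stated choices of `(a,b,c,d)`
satisfy `ad - bc ≠ 0`, `a² + ab - vb² ≠ 0`, and `(aI₂ + bΦ, cI₂ + dΦ)` is
simultaneously equivalent to `(I₂, Φ')`. -/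
theorem Bv_equiv_shift {F : Type*} [Field F] [CharP F 2] (v β : F) :
    SpEquiv (1 : Matrix (Fin 2) (Fin 2) F) (Phi 1 v) 1 (Phi 1 (v + β + β ^ 2)) ∧
    (∀ a b c d : F,
      ((v + β + β ^ 2 ≠ 0 ∧ a = β ∧ b = 1 ∧ c = v + β + β ^ 2 ∧ d = 0) ∨
        (v + β + β ^ 2 = 0 ∧ a = 1 ∧ b = 0 ∧ c = β ∧ d = 1)) →
      a * d - b * c ≠ 0 ∧ a ^ 2 + a * b - v * b ^ 2 ≠ 0 ∧
      ∃ R S : Matrix (Fin 2) (Fin 2) F, IsUnit R ∧ IsUnit S ∧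
        R * (a • (1 : Matrix (Fin 2) (Fin 2) F) + b • Phi 1 v) * S = 1 ∧
        R * (c • (1 : Matrix (Fin 2) (Fin 2) F) + d • Phi 1 v) * S =
          Phi 1 (v + β + β ^ 2)) := by
  have h2 : (2:F) = 0 := by exact_mod_cast CharP.cast_eq_zero F 2
  constructor
  · by_cases h : v + β + β ^ 2 = 0
    · refine ⟨!![(1:F),0;β,1], !![(1:F),β;0,1], !![(1:F),β;0,1], ?_, ?_, ?_, ?_, ?_⟩
      · exact aux_unit_of_det (by simp [Matrix.det_fin_two_of])
      · exact aux_unit_of_det (by simp [Matrix.det_fin_two_of])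
      · exact aux_unit_of_det (by simp [Matrix.det_fin_two_of])
      · ext i j
        fin_cases i <;> fin_cases j <;>
          simp only [Phi, Matrix.mul_apply, Fin.sum_univ_two, Matrix.add_apply,
            Matrix.smul_apply, Matrix.one_apply, Matrix.transpose_apply,
            Matrix.cons_val_zero, Matrix.cons_val_one, Matrix.head_cons,
            Matrix.cons_val', Matrix.empty_val', Matrix.cons_val_fin_one, Matrix.of_apply, Matrix.head_fin_const,
            smul_eq_mul, Fin.zero_eta, Fin.mk_one, ne_eq, one_ne_zero,
            Matrix.one_apply_eq, Matrix.one_apply_ne, Fin.one_eq_zero_iff,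
            Fin.zero_eq_one_iff, Nat.succ_ne_self, ite_true, ite_false, reduceIte] <;>
          ring_nf <;> reduce_mod_char! <;> linear_combination h
      · ext i j
        fin_cases i <;> fin_cases j <;>
          simp only [Phi, Matrix.mul_apply, Fin.sum_univ_two, Matrix.add_apply,
            Matrix.smul_apply, Matrix.one_apply, Matrix.transpose_apply,
            Matrix.cons_val_zero, Matrix.cons_val_one, Matrix.head_cons,
            Matrix.cons_val', Matrix.empty_val', Matrix.cons_val_fin_one, Matrix.of_apply, Matrix.head_fin_const,
            smul_eq_mul, Fin.zero_eta, Fin.mk_one, ne_eq, one_ne_zero,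
            Matrix.one_apply_eq, Matrix.one_apply_ne, Fin.one_eq_zero_iff,
            Fin.zero_eq_one_iff, Nat.succ_ne_self, ite_true, ite_false, reduceIte] <;>
          ring_nf <;> reduce_mod_char! <;> linear_combination h
    · refine ⟨!![(1:F),0;β+1,1],
        !![(β+1)*(v+β+β^2)⁻¹, (v+β+β^2+β+1)*(v+β+β^2)⁻¹; (v+β+β^2)⁻¹, (v+β+β^2)⁻¹],
        !![β, (v+β+β^2); 1, 0], ?_, ?_, ?_, ?_, ?_⟩
      · exact aux_unit_of_det (by simp [Matrix.det_fin_two_of])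
      · refine aux_unit_of_det ?_
        have hdet : (!![(β+1)*(v+β+β^2)⁻¹, (v+β+β^2+β+1)*(v+β+β^2)⁻¹;
            (v+β+β^2)⁻¹, (v+β+β^2)⁻¹] : Matrix (Fin 2) (Fin 2) F).det
            = -(v+β+β^2)⁻¹ := by
          simp only [Matrix.det_fin_two_of]
          field_simp
          ring_nf
          try reduce_mod_char!
        rw [hdet]
        exact neg_ne_zero.mpr (inv_ne_zero h)
      · refine aux_unit_of_det ?_
        simp only [Matrix.det_fin_two_of]
        intro hq
        exact h (by linear_combination -hq)
      · ext i j
        fin_cases i <;> fin_cases j <;>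
          simp only [Phi, Matrix.mul_apply, Fin.sum_univ_two, Matrix.add_apply,
            Matrix.smul_apply, Matrix.one_apply, Matrix.transpose_apply,
            Matrix.cons_val_zero, Matrix.cons_val_one, Matrix.head_cons,
            Matrix.cons_val', Matrix.empty_val', Matrix.cons_val_fin_one, Matrix.of_apply, Matrix.head_fin_const,
            smul_eq_mul, Fin.zero_eta, Fin.mk_one, ne_eq, one_ne_zero,
            Matrix.one_apply_eq, Matrix.one_apply_ne, Fin.one_eq_zero_iff,
            Fin.zero_eq_one_iff, Nat.succ_ne_self, ite_true, ite_false, reduceIte] <;>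
          field_simp <;> ring_nf <;> reduce_mod_char!
      · ext i j
        fin_cases i <;> fin_cases j <;>
          simp only [Phi, Matrix.mul_apply, Fin.sum_univ_two, Matrix.add_apply,
            Matrix.smul_apply, Matrix.one_apply, Matrix.transpose_apply,
            Matrix.cons_val_zero, Matrix.cons_val_one, Matrix.head_cons,
            Matrix.cons_val', Matrix.empty_val', Matrix.cons_val_fin_one, Matrix.of_apply, Matrix.head_fin_const,
            smul_eq_mul, Fin.zero_eta, Fin.mk_one, ne_eq, one_ne_zero,
            Matrix.one_apply_eq, Matrix.one_apply_ne, Fin.one_eq_zero_iff,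
            Fin.zero_eq_one_iff, Nat.succ_ne_self, ite_true, ite_false, reduceIte] <;>
          field_simp <;> ring_nf <;> reduce_mod_char!
  · rintro a b c d (⟨h, ha, hb, hc, hd⟩ | ⟨h, ha, hb, hc, hd⟩) <;> subst ha hb hc hd
    · refine ⟨fun hq => h (by linear_combination -hq),
        fun hq => h (by linear_combination hq + v * h2),
        !![(1:F),(a+1);0,1],
        !![(a+1)*(v+a+a^2)⁻¹, (v+a+a^2+a+1)*(v+a+a^2)⁻¹; (v+a+a^2)⁻¹, (v+a+a^2)⁻¹],
        ?_, ?_, ?_, ?_⟩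
      · exact aux_unit_of_det (by simp [Matrix.det_fin_two_of])
      · refine aux_unit_of_det ?_
        have hdet : (!![(a+1)*(v+a+a^2)⁻¹, (v+a+a^2+a+1)*(v+a+a^2)⁻¹;
            (v+a+a^2)⁻¹, (v+a+a^2)⁻¹] : Matrix (Fin 2) (Fin 2) F).det
            = -(v+a+a^2)⁻¹ := by
          simp only [Matrix.det_fin_two_of]
          field_simp
          ring_nf
          try reduce_mod_char!
        rw [hdet]
        exact neg_ne_zero.mpr (inv_ne_zero h)
      · ext i j
        fin_cases i <;> fin_cases j <;>
          simp only [Phi, Matrix.mul_apply, Fin.sum_univ_two, Matrix.add_apply,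
            Matrix.smul_apply, Matrix.one_apply,
            Matrix.cons_val_zero, Matrix.cons_val_one, Matrix.head_cons,
            Matrix.cons_val', Matrix.empty_val', Matrix.cons_val_fin_one, Matrix.of_apply, Matrix.head_fin_const,
            smul_eq_mul, Fin.zero_eta, Fin.mk_one, ne_eq, one_ne_zero,
            Matrix.one_apply_eq, Matrix.one_apply_ne, Fin.one_eq_zero_iff,
            Fin.zero_eq_one_iff, Nat.succ_ne_self, ite_true, ite_false, reduceIte] <;>
          field_simp <;> ring_nf <;> reduce_mod_char!
      · ext i j
        fin_cases i <;> fin_cases j <;>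
          simp only [Phi, Matrix.mul_apply, Fin.sum_univ_two, Matrix.add_apply,
            Matrix.smul_apply, Matrix.one_apply,
            Matrix.cons_val_zero, Matrix.cons_val_one, Matrix.head_cons,
            Matrix.cons_val', Matrix.empty_val', Matrix.cons_val_fin_one, Matrix.of_apply, Matrix.head_fin_const,
            smul_eq_mul, Fin.zero_eta, Fin.mk_one, ne_eq, one_ne_zero,
            Matrix.one_apply_eq, Matrix.one_apply_ne, Fin.one_eq_zero_iff,
            Fin.zero_eq_one_iff, Nat.succ_ne_self, ite_true, ite_false, reduceIte] <;>
          field_simp <;> ring_nf <;> reduce_mod_char!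
    · refine ⟨by simp, by simp, !![(1:F),c;0,1], !![(1:F),c;0,1], ?_, ?_, ?_, ?_⟩
      · exact aux_unit_of_det (by simp [Matrix.det_fin_two_of])
      · exact aux_unit_of_det (by simp [Matrix.det_fin_two_of])
      · ext i j
        fin_cases i <;> fin_cases j <;>
          simp only [Phi, Matrix.mul_apply, Fin.sum_univ_two, Matrix.add_apply,
            Matrix.smul_apply, Matrix.one_apply,
            Matrix.cons_val_zero, Matrix.cons_val_one, Matrix.head_cons,
            Matrix.cons_val', Matrix.empty_val', Matrix.cons_val_fin_one, Matrix.of_apply, Matrix.head_fin_const,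
            smul_eq_mul, Fin.zero_eta, Fin.mk_one, ne_eq, one_ne_zero,
            Matrix.one_apply_eq, Matrix.one_apply_ne, Fin.one_eq_zero_iff,
            Fin.zero_eq_one_iff, Nat.succ_ne_self, ite_true, ite_false, reduceIte] <;>
          ring_nf <;> reduce_mod_char! <;> linear_combination h
      · ext i j
        fin_cases i <;> fin_cases j <;>
          simp only [Phi, Matrix.mul_apply, Fin.sum_univ_two, Matrix.add_apply,
            Matrix.smul_apply, Matrix.one_apply,
            Matrix.cons_val_zero, Matrix.cons_val_one, Matrix.head_cons,
            Matrix.cons_val', Matrix.empty_val', Matrix.cons_val_fin_one, Matrix.of_apply, Matrix.head_fin_const,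
            smul_eq_mul, Fin.zero_eta, Fin.mk_one, ne_eq, one_ne_zero,
            Matrix.one_apply_eq, Matrix.one_apply_ne, Fin.one_eq_zero_iff,
            Fin.zero_eq_one_iff, Nat.succ_ne_self, ite_true, ite_false, reduceIte] <;>
          ring_nf <;> reduce_mod_char! <;> linear_combination h
end

section
/- Let F be a field of characteristic 2 in which the Artin–Schreier map β ↦ β + β² is surjective (e.g. F algebraically closed). Then for every v ∈ F, the spatial matrix B(v) with slices (I₂, [[0,v],[1,1]]) is equivalent to B(0) with slices (I₂, [[0,0],[1,1]]). -/
open Polynomial Matrix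

/-- If `char F = 2` and the Artin–Schreier map `β ↦ β + β²` is surjective,
then every `B(v)` is equivalent to `B(0)`. -/
theorem Bv_equiv_B0 {F : Type*} [Field F] [CharP F 2]
    (hAS : ∀ v : F, ∃ β : F, β + β ^ 2 = v) (v : F) :
    SpEquiv (1 : Matrix (Fin 2) (Fin 2) F) (Phi 1 v) 1 (Phi 1 0) := by
  obtain ⟨β, hβ⟩ := hAS v
  have h2 : (2 : F) = 0 := by
    have := CharP.cast_eq_zero F 2
    simpa using this
  refine ⟨!![1, 0; β, 1], !![1, β; 0, 1], !![1, β; 0, 1], ?_, ?_, ?_, ?_, ?_⟩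
  · rw [Matrix.isUnit_iff_isUnit_det]
    simp [Matrix.det_fin_two_of]
  · rw [Matrix.isUnit_iff_isUnit_det]
    simp [Matrix.det_fin_two_of]
  · rw [Matrix.isUnit_iff_isUnit_det]
    simp [Matrix.det_fin_two_of]
  · ext i j
    fin_cases i <;> fin_cases j <;>
      simp [Phi, Matrix.mul_apply, Fin.sum_univ_succ, Matrix.one_apply] <;>
      linear_combination β * h2
  · subst hβ
    ext i j
    fin_cases i <;> fin_cases j <;>
      simp [Phi, Matrix.mul_apply, Fin.sum_univ_succ, Matrix.one_apply] <;>
      first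
        | linear_combination β*h2
        | linear_combination (β + 2*β^2)*h2
end
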